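/- arXiv:1307.1162 — 6 statements merged into one kernel-verified Lean document; each statement's English description precedes it below -/
import Mathlib

section
/- Let ℋ be a complex Hilbert space, let H_fr and V be bounded self-adjoint operators on ℋ, and let ε > 0. For λ ∈ ℝ and t ∈ ℝ set H_{ε,λ}(t) := H_fr + λ e^{−ε|t|} V. Suppose U : ℝ×ℝ×ℝ → B(ℋ), (λ,t₊,t₋) ↦ U_{ε,λ}(t₊,t₋), is continuously differentiable in operator norm in all variables and satisfies ∂_{t₊}U_{ε,λ}(t₊,t₋) = −i H_{ε,λ}(t₊) U_{ε,λ}(t₊,t₋), ∂_{t₋}U_{ε,λ}(t₊,t₋) = i U_{ε,λ}(t₊,t₋) H_{ε,λ}(t₋), and U_{ε,λ}(t,t) = 1 for all t. Then: (i) whenever 0 ≥ t₊ ≥ t₋, one has i ε λ ∂_λ U_{ε,λ}(t₊,t₋) = H_{ε,λ}(t₊) U_{ε,λ}(t₊,t₋) − U_{ε,λ}(t₊,t₋) H_{ε,λ}(t₋); (ii) whenever t₊ ≥ t₋ ≥ 0, one has i ε λ ∂_λ U_{ε,λ}(t₊,t₋) = −H_{ε,λ}(t₊) U_{ε,λ}(t₊,t₋)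 + U_{ε,λ}(t₊,t₋) H_{ε,λ}(t₋). -/
/-!
Translating time by `s` in the switched Hamiltonian `H_fr + λ e^{-ε|t|} V` rescales the coupling:
on `t, t + s ≤ 0` one has `H_{ε,λ}(t + s) = H_{ε,λ e^{εs}}(t)`, so by uniqueness of the dynamics
`U_λ(t₊ + s, t₋ + s) = U_{λ e^{εs}}(t₊, t₋)` for `s ≤ 0`. Differentiating at `s = 0` from the left,
the left side gives `∂_{t₊}U + ∂_{t₋}U = -i(H(t₊)U - UH(t₋))` and the right side gives `ελ ∂_λ U`.
For `t₋ ≥ 0` the same works with `e^{-εs}` and `s ≥ 0`.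
-/

section Propagator

variable {A : Type*} [NormedRing A] [NormedAlgebra ℝ A]

/-- `W t s` is the propagator from time `s` to time `t` of the linear equation `X' = K t * X`. -/
structure IsPropagator (K : ℝ → A) (W : ℝ → ℝ → A) : Prop where
  hasDerivAt_left : ∀ t s, HasDerivAt (fun r => W r s) (K t * W t s) t
  hasDerivAt_right : ∀ t s, HasDerivAt (fun r => W t r) (-(W t s * K s)) s
  diag : ∀ t, W t t = 1

namespace IsPropagator

variable {K K' : ℝ → A} {W W' : ℝ → ℝ → A}

theorem mul_eq (hW : IsPropagator K W) (a b c : ℝ) : W a b * W b c = W a c := by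
  have hzero : ∀ y, HasDerivAt (fun y => W a y * W y c) 0 y := by
    intro y
    refine ((hW.hasDerivAt_right a y).mul (hW.hasDerivAt_left y c)).congr_deriv ?_
    noncomm_ring
  have := is_const_of_deriv_eq_zero (fun y => (hzero y).differentiableAt)
    (fun y => (hzero y).deriv) b c
  simpa [hW.diag] using this

theorem eq_of_hasDerivAt (hW : IsPropagator K W) {X : ℝ → A} {a b : ℝ} (hab : a ≤ b)
    (hX : ∀ t ∈ Set.Icc a b, HasDerivAt X (K t * X t) t) (ha : X a = 1) : X b = W b a := by
  have hY : ∀ t ∈ Set.Icc a b, HasDerivAt (fun t => W a t * X t) 0 t := by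
    intro t ht
    refine ((hW.hasDerivAt_right a t).mul (hX t ht)).congr_deriv ?_
    noncomm_ring
  have hconst : W a b * X b = W a a * X a :=
    constant_of_has_deriv_right_zero
      (fun t ht => (hY t ht).continuousAt.continuousWithinAt)
      (fun t ht => (hY t ⟨ht.1, ht.2.le⟩).hasDerivWithinAt) b ⟨hab, le_rfl⟩
  rw [hW.diag, ha, one_mul] at hconst
  calc X b = W b a * (W a b * X b) := by rw [← mul_assoc, hW.mul_eq, hW.diag, one_mul]
    _ = W b a := by rw [hconst, mul_one]

theorem shift_eq (hW : IsPropagator K W) (hW' : IsPropagator K' W') {a b s : ℝ} (hab : a ≤ b)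
    (hK : ∀ t ∈ Set.Icc a b, K (t + s) = K' t) : W (b + s) (a + s) = W' b a :=
  hW'.eq_of_hasDerivAt (X := fun t => W (t + s) (a + s)) hab
    (fun t ht => hK t ht ▸ (hW.hasDerivAt_left (t + s) (a + s)).comp_add_const t s)
    (hW.diag _)

end IsPropagator

theorem IsPropagator.smul_deriv_eq_of_shift_eq {K : ℝ → ℝ → A} {U : ℝ → ℝ → ℝ → A}
    (hU : ∀ l, IsPropagator (K l) (U l)) {lam tp tm c : ℝ}
    (hd : DifferentiableAt ℝ (fun q : ℝ × ℝ × ℝ => U q.1 q.2.1 q.2.2) (lam, tp, tm))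
    {S : Set ℝ} (hS : UniqueDiffWithinAt ℝ S 0)
    (hshift : ∀ s ∈ S, U lam (tp + s) (tm + s) = U (lam * Real.exp (c * s)) tp tm) :
    (c * lam) • deriv (fun l => U l tp tm) lam
      = K lam tp * U lam tp tm - U lam tp tm * K lam tm := by
  set D := fderiv ℝ (fun q : ℝ × ℝ × ℝ => U q.1 q.2.1 q.2.2) (lam, tp, tm)
  have hD := hd.hasFDerivAt
  have hcoupling : HasDerivAt (fun l => U l tp tm) (D (1, 0, 0)) lam :=
    hD.comp_hasDerivAt_of_eq lam ((hasDerivAt_id lam).prodMk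
      ((hasDerivAt_const lam tp).prodMk (hasDerivAt_const lam tm))) rfl
  have hplus : D (0, 1, 0) = K lam tp * U lam tp tm :=
    HasDerivAt.unique (f := fun r => U lam r tm)
      (hD.comp_hasDerivAt_of_eq tp ((hasDerivAt_const tp lam).prodMk
        ((hasDerivAt_id tp).prodMk (hasDerivAt_const tp tm))) rfl)
      ((hU lam).hasDerivAt_left tp tm)
  have hminus : D (0, 0, 1) = -(U lam tp tm * K lam tm) :=
    HasDerivAt.unique (f := fun r => U lam tp r)
      (hD.comp_hasDerivAt_of_eq tm ((hasDerivAt_const tm lam).prodMk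
        ((hasDerivAt_const tm tp).prodMk (hasDerivAt_id tm))) rfl)
      ((hU lam).hasDerivAt_right tp tm)
  -- Only the total derivative sees the diagonal direction `(0, 1, 1)`.
  have hdiag : HasDerivAt (fun s => U lam (tp + s) (tm + s)) (D (0, 1, 1)) 0 :=
    hD.comp_hasDerivAt_of_eq 0 ((hasDerivAt_const 0 lam).prodMk
      (((hasDerivAt_id 0).const_add tp).prodMk ((hasDerivAt_id 0).const_add tm))) (by simp)
  have hexp : HasDerivAt (fun s => lam * Real.exp (c * s)) (c * lam) 0 := by
    simpa [mul_comm] using (((hasDerivAt_id 0).const_mul c).exp).const_mul lam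
  have hrescale : HasDerivAt (fun s => U (lam * Real.exp (c * s)) tp tm) (D (c * lam, 0, 0)) 0 :=
    hD.comp_hasDerivAt_of_eq 0
      (hexp.prodMk ((hasDerivAt_const 0 tp).prodMk (hasDerivAt_const 0 tm))) (by simp)
  have heq : D (0, 1, 1) = D (c * lam, 0, 0) :=
    hS.eq_deriv S hdiag.hasDerivWithinAt (hrescale.hasDerivWithinAt.congr hshift (by simp))
  have hsplit : D (0, 1, 1) = D (0, 1, 0) + D (0, 0, 1) := by
    rw [← map_add]; simp
  have hscale : D (c * lam, 0, 0) = (c * lam) • D (1, 0, 0) := by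
    rw [← map_smul]; simp
  rw [hcoupling.deriv, ← hscale, ← heq, hsplit, hplus, hminus, sub_eq_add_neg]

end Propagator

theorem Real.exp_neg_mul_abs_add_of_nonpos {ε t s : ℝ} (ht : t ≤ 0) (hts : t + s ≤ 0) :
    Real.exp (-(ε * |t + s|)) = Real.exp (ε * s) * Real.exp (-(ε * |t|)) := by
  rw [abs_of_nonpos ht, abs_of_nonpos hts, ← Real.exp_add]
  ring_nf

theorem Real.exp_neg_mul_abs_add_of_nonneg {ε t s : ℝ} (ht : 0 ≤ t) (hts : 0 ≤ t + s) :
    Real.exp (-(ε * |t + s|)) = Real.exp (-(ε * s)) * Real.exp (-(ε * |t|)) := by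
  rw [abs_of_nonneg ht, abs_of_nonneg hts, ← Real.exp_add]
  ring_nf

theorem stmt_0_general
    {ℋ : Type*} [NormedAddCommGroup ℋ] [InnerProductSpace ℂ ℋ]
    (Hfr V : ℋ →L[ℂ] ℋ)
    (ε : ℝ)
    (Ham : ℝ → ℝ → (ℋ →L[ℂ] ℋ))
    (hHam : ∀ lam t : ℝ, Ham lam t = Hfr + ((lam * Real.exp (-(ε * |t|)) : ℝ) : ℂ) • V)
    (U : ℝ → ℝ → ℝ → (ℋ →L[ℂ] ℋ))
    (hUC1 : ContDiff ℝ 1 (fun q : ℝ × ℝ × ℝ => U q.1 q.2.1 q.2.2))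
    (hUderivPlus : ∀ lam tp tm : ℝ,
      HasDerivAt (fun s => U lam s tm) (-(Complex.I • ((Ham lam tp) ∘L (U lam tp tm)))) tp)
    (hUderivMinus : ∀ lam tp tm : ℝ,
      HasDerivAt (fun s => U lam tp s) (Complex.I • ((U lam tp tm) ∘L (Ham lam tm))) tm)
    (hUid : ∀ lam t : ℝ, U lam t t = 1) :
    ∀ lam tp tm : ℝ,
      (tp ≤ 0 → tm ≤ tp →
        (Complex.I * (ε : ℂ) * (lam : ℂ)) • deriv (fun l => U l tp tm) lam
          = (Ham lam tp) ∘L (U lam tp tm) - (U lam tp tm) ∘L (Ham lam tm)) ∧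
      (tm ≤ tp → 0 ≤ tm →
        (Complex.I * (ε : ℂ) * (lam : ℂ)) • deriv (fun l => U l tp tm) lam
          = -((Ham lam tp) ∘L (U lam tp tm)) + (U lam tp tm) ∘L (Ham lam tm)) := by
  have hU : ∀ l, IsPropagator (fun t => -(Complex.I • Ham l t)) (U l) := fun l =>
    { hasDerivAt_left := fun t s => by
        simpa only [neg_mul, smul_mul_assoc, ContinuousLinearMap.mul_def] using hUderivPlus l t s
      hasDerivAt_right := fun t s => by
        simpa only [mul_neg, neg_neg, mul_smul_comm, ContinuousLinearMap.mul_def]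
          using hUderivMinus l t s
      diag := hUid l }
  intro lam tp tm
  have hd := hUC1.differentiable one_ne_zero (lam, tp, tm)
  refine ⟨fun htp hle => ?_, fun hle htm => ?_⟩
  · have h := IsPropagator.smul_deriv_eq_of_shift_eq hU hd (c := ε)
      (uniqueDiffOn_Iic 0 0 Set.self_mem_Iic) fun s hs =>
        (hU lam).shift_eq (hU _) hle fun t ht => by
          rw [hHam, hHam, Real.exp_neg_mul_abs_add_of_nonpos (ht.2.trans htp)
            (add_nonpos (ht.2.trans htp) hs), mul_assoc]
    simp only [neg_mul, mul_neg, smul_mul_assoc, mul_smul_comm, ContinuousLinearMap.mul_def,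
      ← Complex.coe_smul] at h
    linear_combination (norm := match_scalars <;> simp [mul_assoc]) Complex.I • h
  · have h := IsPropagator.smul_deriv_eq_of_shift_eq hU hd (c := -ε)
      (uniqueDiffOn_Ici 0 0 Set.self_mem_Ici) fun s hs =>
        (hU lam).shift_eq (hU _) hle fun t ht => by
          rw [hHam, hHam, Real.exp_neg_mul_abs_add_of_nonneg (htm.trans ht.1)
            (add_nonneg (htm.trans ht.1) hs), mul_assoc, neg_mul]
    simp only [neg_mul, mul_neg, smul_mul_assoc, mul_smul_comm, ContinuousLinearMap.mul_def,
      ← Complex.coe_smul] at h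
    linear_combination (norm := match_scalars <;> simp [mul_assoc]) -Complex.I • h

/-- Gell-Mann–Low adiabatic switching: the basic differential identity for the
adiabatically switched dynamics. -/
theorem stmt_0
    {ℋ : Type*} [NormedAddCommGroup ℋ] [InnerProductSpace ℂ ℋ] [CompleteSpace ℋ]
    (Hfr V : ℋ →L[ℂ] ℋ) (hHfr : IsSelfAdjoint Hfr) (hV : IsSelfAdjoint V)
    (ε : ℝ) (hε : 0 < ε)
    (Ham : ℝ → ℝ → (ℋ →L[ℂ] ℋ))
    (hHam : ∀ lam t : ℝ, Ham lam t = Hfr + ((lam * Real.exp (-(ε * |t|)) : ℝ) : ℂ) • V)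
    (U : ℝ → ℝ → ℝ → (ℋ →L[ℂ] ℋ))
    (hUC1 : ContDiff ℝ 1 (fun q : ℝ × ℝ × ℝ => U q.1 q.2.1 q.2.2))
    (hUderivPlus : ∀ lam tp tm : ℝ,
      HasDerivAt (fun s => U lam s tm) (-(Complex.I • ((Ham lam tp) ∘L (U lam tp tm)))) tp)
    (hUderivMinus : ∀ lam tp tm : ℝ,
      HasDerivAt (fun s => U lam tp s) (Complex.I • ((U lam tp tm) ∘L (Ham lam tm))) tm)
    (hUid : ∀ lam t : ℝ, U lam t t = 1) :
    ∀ lam tp tm : ℝ,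
      (tp ≤ 0 → tm ≤ tp →
        (Complex.I * (ε : ℂ) * (lam : ℂ)) • deriv (fun l => U l tp tm) lam
          = (Ham lam tp) ∘L (U lam tp tm) - (U lam tp tm) ∘L (Ham lam tm)) ∧
      (tm ≤ tp → 0 ≤ tm →
        (Complex.I * (ε : ℂ) * (lam : ℂ)) • deriv (fun l => U l tp tm) lam
          = -((Ham lam tp) ∘L (U lam tp tm)) + (U lam tp tm) ∘L (Ham lam tm)) :=
  stmt_0_general Hfr V ε Ham hHam U hUC1 hUderivPlus hUderivMinus hUid
end

section
/- Let ℋ be a complex Hilbert space, H_fr and V bounded self-adjoint operators on ℋ, ε > 0 and σ ∈ {1,−1}. For λ > 0 put H_λ := H_fr + λV. Let (0,∞) ∋ λ ↦ S_λ ∈ B(ℋ) be differentiable in operator norm and satisfy σ i ε λ S_λ' = H_λ S_λ − S_λ H_fr. Let Φ_fr ∈ ℋ be a unit vector with H_fr Φ_fr = E_fr Φ_fr for some E_fr ∈ ℝ. Then: (a) (H_λ − E_fr)(S_λ Φ_fr) = σ i ε λ (d/dλ)(S_λ Φ_fr) for all λ > 0. Moreover, if c_λ := ⟨Φ_fr,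 S_λΦ_fr⟩ ≠ 0 for all λ in an open interval I ⊆ (0,∞), and one sets Φ_λ := S_λΦ_fr / c_λ and E_λ := ⟨Φ_fr, H_λ Φ_λ⟩, then for all λ ∈ I: (b) σ i ε λ c_λ'/c_λ = E_λ − E_fr, and (c) (H_λ − E_λ)Φ_λ = σ i ε λ Φ_λ'. -/
local notation "⟪" x ", " y "⟫" => @inner ℂ _ _ x y

/-!
Applying the intertwining relation `σiελ S' = H_λ S - S H_fr` to the eigenvector `Φ_fr` turns it
into the first-order equation `σiελ ψ' = (H_λ - E_fr) ψ` for `ψ = S Φ_fr`; this is (a). Parts (b)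
and (c) hold for any solution `ψ` of such an equation and any continuous linear functional `ℓ`
with `ℓ ψ ≠ 0` (here `ℓ = ⟪Φ_fr, ·⟫`): applying `ℓ` gives (b), and the quotient rule for
`Φ = (ℓ ψ)⁻¹ • ψ` combined with (b) gives (c).
-/

section

variable {E F : Type*} [NormedAddCommGroup E] [NormedSpace ℂ E]
  [NormedAddCommGroup F] [NormedSpace ℂ F]

theorem HasDerivAt.clm_apply_const {S : ℝ → E →L[ℂ] F} {S' : E →L[ℂ] F} {t : ℝ}
    (hS : HasDerivAt S S' t) (x : E) : HasDerivAt (fun l => S l x) (S' x) t :=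
  ((ContinuousLinearMap.apply ℂ F x).restrictScalars ℝ).hasFDerivAt.comp_hasDerivAt t hS

theorem HasDerivAt.continuousLinearMap_comp (ℓ : E →L[ℂ] F) {ψ : ℝ → E} {ψ' : E} {t : ℝ}
    (hψ : HasDerivAt ψ ψ' t) : HasDerivAt (fun l => ℓ (ψ l)) (ℓ ψ') t :=
  (ℓ.restrictScalars ℝ).hasFDerivAt.comp_hasDerivAt t hψ

theorem intertwining_apply_eigenvector {A B T T' : E →L[ℂ] E} {μ e : ℂ} {x : E}
    (hT : μ • T' = A ∘L T - T ∘L B) (hx : B x = e • x) :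
    μ • T' x = A (T x) - e • T x := by
  simpa [hx] using congrArg (fun R : E →L[ℂ] E => R x) hT

section Renormalization

variable (A : E →L[ℂ] E) (ℓ : E →L[ℂ] ℂ) {μ e : ℂ} {ψ : ℝ → E} {ψ' : E} {t : ℝ}

theorem renormalized_energy_shift (hψ : HasDerivAt ψ ψ' t)
    (hode : μ • ψ' = A (ψ t) - e • ψ t) (hc : ℓ (ψ t) ≠ 0) :
    μ * deriv (fun l => ℓ (ψ l)) t / ℓ (ψ t) = ℓ (A ((ℓ (ψ t))⁻¹ • ψ t)) - e := by
  have hc' : μ * ℓ ψ' = ℓ (A (ψ t)) - e * ℓ (ψ t) := by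
    simpa only [map_sub, map_smul, smul_eq_mul] using congrArg ℓ hode
  rw [(hψ.continuousLinearMap_comp ℓ).deriv, hc', map_smul, map_smul, smul_eq_mul]
  field_simp

theorem renormalized_eigen_ode (hψ : HasDerivAt ψ ψ' t)
    (hode : μ • ψ' = A (ψ t) - e • ψ t) (hc : ℓ (ψ t) ≠ 0) :
    A ((ℓ (ψ t))⁻¹ • ψ t) - ℓ (A ((ℓ (ψ t))⁻¹ • ψ t)) • ((ℓ (ψ t))⁻¹ • ψ t)
      = μ • deriv (fun l => (ℓ (ψ l))⁻¹ • ψ l) t := by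
  have hshift := renormalized_energy_shift A ℓ hψ hode hc
  have hΦ : HasDerivAt (fun l => (ℓ (ψ l))⁻¹ • ψ l)
      ((ℓ (ψ t))⁻¹ • ψ' + (-ℓ ψ' / ℓ (ψ t) ^ 2) • ψ t) t :=
    ((hψ.continuousLinearMap_comp ℓ).inv hc).smul hψ
  rw [hΦ.deriv]
  rw [(hψ.continuousLinearMap_comp ℓ).deriv] at hshift
  set c := ℓ (ψ t)
  have hμ : μ * (-ℓ ψ' / c ^ 2) = -(ℓ (A (c⁻¹ • ψ t)) - e) * c⁻¹ := by
    rw [← hshift]; field_simp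
  rw [smul_add, smul_comm μ c⁻¹, hode, smul_smul μ, hμ, map_smul]
  module

end Renormalization

end

theorem stmt_1_general
    {ℋ : Type*} [NormedAddCommGroup ℋ] [InnerProductSpace ℂ ℋ]
    (Hfr V : ℋ →L[ℂ] ℋ)
    (ε : ℝ) (σ : ℝ)
    (S S' : ℝ → ℋ →L[ℂ] ℋ)
    (hS : ∀ lam : ℝ, 0 < lam → HasDerivAt S (S' lam) lam)
    (hODE : ∀ lam : ℝ, 0 < lam →
      ((σ : ℂ) * Complex.I * (ε : ℂ) * (lam : ℂ)) • S' lam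
        = (Hfr + (lam : ℂ) • V) ∘L S lam - S lam ∘L Hfr)
    (Φfr : ℋ)
    (Efr : ℝ) (hEfr : Hfr Φfr = (Efr : ℂ) • Φfr) :
    (∀ lam : ℝ, 0 < lam →
      (Hfr + (lam : ℂ) • V) (S lam Φfr) - (Efr : ℂ) • (S lam Φfr)
        = ((σ : ℂ) * Complex.I * (ε : ℂ) * (lam : ℂ)) • deriv (fun l => S l Φfr) lam)
    ∧ (∀ a b : ℝ, Set.Ioo a b ⊆ Set.Ioi (0 : ℝ) →
        (∀ lam ∈ Set.Ioo a b, ⟪Φfr, S lam Φfr⟫ ≠ 0) →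
        ∀ lam ∈ Set.Ioo a b,
          ((σ : ℂ) * Complex.I * (ε : ℂ) * (lam : ℂ))
              * deriv (fun l => ⟪Φfr, S l Φfr⟫) lam / ⟪Φfr, S lam Φfr⟫
            = ⟪Φfr, (Hfr + (lam : ℂ) • V) ((⟪Φfr, S lam Φfr⟫)⁻¹ • S lam Φfr)⟫ - (Efr : ℂ)
          ∧ (Hfr + (lam : ℂ) • V) ((⟪Φfr, S lam Φfr⟫)⁻¹ • S lam Φfr)
                - ⟪Φfr, (Hfr + (lam : ℂ) • V) ((⟪Φfr, S lam Φfr⟫)⁻¹ • S lam Φfr)⟫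
                    • ((⟪Φfr, S lam Φfr⟫)⁻¹ • S lam Φfr)
            = ((σ : ℂ) * Complex.I * (ε : ℂ) * (lam : ℂ))
                • deriv (fun l => (⟪Φfr, S l Φfr⟫)⁻¹ • S l Φfr) lam) := by
  have hψ : ∀ lam, 0 < lam → HasDerivAt (fun l => S l Φfr) (S' lam Φfr) lam :=
    fun lam h => (hS lam h).clm_apply_const Φfr
  have hode : ∀ lam : ℝ, 0 < lam → ((σ : ℂ) * Complex.I * (ε : ℂ) * (lam : ℂ)) • S' lam Φfr
      = (Hfr + (lam : ℂ) • V) (S lam Φfr) - (Efr : ℂ) • S lam Φfr :=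
    fun lam h => intertwining_apply_eigenvector (hODE lam h) hEfr
  refine ⟨fun lam h => by rw [(hψ lam h).deriv, hode lam h], ?_⟩
  intro a b hab hc lam hlam
  have hpos : 0 < lam := hab hlam
  exact ⟨renormalized_energy_shift _ (innerSL ℂ Φfr) (hψ lam hpos) (hode lam hpos) (hc lam hlam),
    renormalized_eigen_ode _ (innerSL ℂ Φfr) (hψ lam hpos) (hode lam hpos) (hc lam hlam)⟩

/-- Gell-Mann–Low adiabatic Møller operators: eigenvalue-type equations for the
renormalized interacting vector. -/
theorem stmt_1
    {ℋ : Type*} [NormedAddCommGroup ℋ] [InnerProductSpace ℂ ℋ] [CompleteSpace ℋ]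
    (Hfr V : ℋ →L[ℂ] ℋ) (hHfr : IsSelfAdjoint Hfr) (hV : IsSelfAdjoint V)
    (ε : ℝ) (hε : 0 < ε) (σ : ℝ) (hσ : σ = 1 ∨ σ = -1)
    (S S' : ℝ → ℋ →L[ℂ] ℋ)
    (hS : ∀ lam : ℝ, 0 < lam → HasDerivAt S (S' lam) lam)
    (hODE : ∀ lam : ℝ, 0 < lam →
      ((σ : ℂ) * Complex.I * (ε : ℂ) * (lam : ℂ)) • S' lam
        = (Hfr + (lam : ℂ) • V) ∘L S lam - S lam ∘L Hfr)
    (Φfr : ℋ) (hΦfr : ‖Φfr‖ = 1)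
    (Efr : ℝ) (hEfr : Hfr Φfr = (Efr : ℂ) • Φfr) :
    (∀ lam : ℝ, 0 < lam →
      (Hfr + (lam : ℂ) • V) (S lam Φfr) - (Efr : ℂ) • (S lam Φfr)
        = ((σ : ℂ) * Complex.I * (ε : ℂ) * (lam : ℂ)) • deriv (fun l => S l Φfr) lam)
    ∧ (∀ a b : ℝ, Set.Ioo a b ⊆ Set.Ioi (0 : ℝ) →
        (∀ lam ∈ Set.Ioo a b, ⟪Φfr, S lam Φfr⟫ ≠ 0) →
        ∀ lam ∈ Set.Ioo a b,
          ((σ : ℂ) * Complex.I * (ε : ℂ) * (lam : ℂ))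
              * deriv (fun l => ⟪Φfr, S l Φfr⟫) lam / ⟪Φfr, S lam Φfr⟫
            = ⟪Φfr, (Hfr + (lam : ℂ) • V) ((⟪Φfr, S lam Φfr⟫)⁻¹ • S lam Φfr)⟫ - (Efr : ℂ)
          ∧ (Hfr + (lam : ℂ) • V) ((⟪Φfr, S lam Φfr⟫)⁻¹ • S lam Φfr)
                - ⟪Φfr, (Hfr + (lam : ℂ) • V) ((⟪Φfr, S lam Φfr⟫)⁻¹ • S lam Φfr)⟫
                    • ((⟪Φfr, S lam Φfr⟫)⁻¹ • S lam Φfr)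
            = ((σ : ℂ) * Complex.I * (ε : ℂ) * (lam : ℂ))
                • deriv (fun l => (⟪Φfr, S l Φfr⟫)⁻¹ • S l Φfr) lam) :=
  stmt_1_general Hfr V ε σ S S' hS hODE Φfr Efr hEfr
end

section
/- Let ℋ be a complex Hilbert space, Φ_fr ∈ ℋ a unit vector, and H a closed densely defined operator on ℋ. For each ε > 0 let S_ε be a unitary operator on ℋ with c_ε := ⟨Φ_fr, S_εΦ_fr⟩ ≠ 0, and set Φ_ε := S_εΦ_fr / c_ε. Assume Φ_ε lies in the domain of H and that there are E_ε ∈ ℂ and vectors Ψ_ε ∈ ℋ with HΦ_ε = E_εΦ_ε + Ψ_ε. Assume further that, as ε ↓ 0, Φ_ε converges to some Φ₀ ≠ 0, E_ε converges to some E ∈ ℂ, and Ψ_ε → 0. Then: (1) |c_ε| converges to 1/‖Φ₀‖, and the Gell-Mann–Low vector Φ_GL := lim_{ε↓0} |c_ε| Φ_ε exists and equals the unit vector Φ₀/‖Φ₀‖; (2) Φ_GL lies in the domain of H and H Φ_GL = E Φ_GL. -/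
/-!
Unitarity of `S ε` gives `‖Φ ε‖ = 1 / ‖c ε‖`, so the first two claims follow from `Φ ε → Φ₀`
by continuity of the norm. The graph of `T` contains `(Φ ε, Eps ε • Φ ε + Ψ ε) → (Φ₀, E • Φ₀)`;
being a closed submodule, it contains the limit and its rescalings.
-/

open Topology Filter

local notation "⟪" x ", " y "⟫" => @inner ℂ _ _ x y

theorem norm_inv_smul_apply_of_mem_unitary {𝕜 H : Type*} [RCLike 𝕜] [NormedAddCommGroup H]
    [InnerProductSpace 𝕜 H] [CompleteSpace H] {u : H →L[𝕜] H}
    (hu : u ∈ unitary (H →L[𝕜] H)) {x : H} (hx : ‖x‖ = 1) (a : 𝕜) :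
    ‖a⁻¹ • u x‖ = ‖a‖⁻¹ := by
  rw [norm_smul, u.norm_map_of_mem_unitary hu, hx, mul_one, norm_inv]

theorem LinearPMap.IsClosed.mem_graph_smul_of_tendsto {R E ι : Type*} [CommRing R]
    [TopologicalSpace R] [AddCommGroup E] [Module R E] [TopologicalSpace E] [ContinuousAdd E]
    [ContinuousSMul R E] {T : E →ₗ.[R] E} (hT : T.IsClosed) {l : Filter ι} [l.NeBot]
    {x ψ : ι → E} {μ : ι → R} {x₀ : E} {μ₀ : R}
    (hmem : ∀ᶠ i in l, (x i, μ i • x i + ψ i) ∈ T.graph)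
    (hx : Tendsto x l (𝓝 x₀)) (hμ : Tendsto μ l (𝓝 μ₀)) (hψ : Tendsto ψ l (𝓝 0)) :
    (x₀, μ₀ • x₀) ∈ T.graph := by
  have hTx : Tendsto (fun i => μ i • x i + ψ i) l (𝓝 (μ₀ • x₀)) := by
    simpa only [add_zero] using (hμ.smul hx).add hψ
  exact hT.mem_of_tendsto (hx.prodMk_nhds hTx) hmem

theorem stmt_2_general
    {ℋ : Type*} [NormedAddCommGroup ℋ] [InnerProductSpace ℂ ℋ] [CompleteSpace ℋ]
    (Φfr : ℋ) (hΦfr : ‖Φfr‖ = 1)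
    (T : ℋ →ₗ.[ℂ] ℋ) (hTclosed : T.IsClosed)
    (S : ℝ → (ℋ →L[ℂ] ℋ)) (hSU : ∀ ε : ℝ, 0 < ε → S ε ∈ unitary (ℋ →L[ℂ] ℋ))
    (c : ℝ → ℂ)
    (Φ : ℝ → ℋ) (hΦ : ∀ ε : ℝ, 0 < ε → Φ ε = (c ε)⁻¹ • (S ε Φfr))
    (hdom : ∀ ε : ℝ, 0 < ε → Φ ε ∈ T.domain)
    (Eps : ℝ → ℂ) (Ψ : ℝ → ℋ)
    (hTΦ : ∀ (ε : ℝ) (hε : 0 < ε), T ⟨Φ ε, hdom ε hε⟩ = Eps ε • Φ ε + Ψ ε)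
    (Φ₀ : ℋ) (hΦ₀ : Φ₀ ≠ 0)
    (hlimΦ : Tendsto Φ (𝓝[>] (0 : ℝ)) (𝓝 Φ₀))
    (E : ℂ) (hlimE : Tendsto Eps (𝓝[>] (0 : ℝ)) (𝓝 E))
    (hlimΨ : Tendsto Ψ (𝓝[>] (0 : ℝ)) (𝓝 0)) :
    Tendsto (fun ε => ‖c ε‖) (𝓝[>] (0 : ℝ)) (𝓝 (1 / ‖Φ₀‖))
    ∧ Tendsto (fun ε => ‖c ε‖ • Φ ε) (𝓝[>] (0 : ℝ)) (𝓝 (‖Φ₀‖⁻¹ • Φ₀))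
    ∧ ∃ hmem : ‖Φ₀‖⁻¹ • Φ₀ ∈ T.domain,
        T ⟨‖Φ₀‖⁻¹ • Φ₀, hmem⟩ = E • (‖Φ₀‖⁻¹ • Φ₀) := by
  have hnorm : ∀ᶠ ε in 𝓝[>] (0 : ℝ), ‖Φ ε‖⁻¹ = ‖c ε‖ := by
    filter_upwards [self_mem_nhdsWithin] with ε hε
    rw [hΦ ε hε, norm_inv_smul_apply_of_mem_unitary (hSU ε hε) hΦfr, inv_inv]
  have hlimc : Tendsto (fun ε => ‖c ε‖) (𝓝[>] (0 : ℝ)) (𝓝 ‖Φ₀‖⁻¹) :=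
    (hlimΦ.norm.inv₀ (norm_ne_zero_iff.2 hΦ₀)).congr' hnorm
  refine ⟨by simpa only [one_div] using hlimc, hlimc.smul hlimΦ, ?_⟩
  have hgraph : (Φ₀, E • Φ₀) ∈ T.graph := by
    refine hTclosed.mem_graph_smul_of_tendsto ?_ hlimΦ hlimE hlimΨ
    filter_upwards [self_mem_nhdsWithin] with ε hε
    exact T.mem_graph_iff.2 ⟨⟨Φ ε, hdom ε hε⟩, rfl, hTΦ ε hε⟩
  have hscaled : (‖Φ₀‖⁻¹ • Φ₀, E • ‖Φ₀‖⁻¹ • Φ₀) ∈ T.graph := by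
    simpa only [Prod.smul_mk, smul_comm (‖Φ₀‖⁻¹)] using T.graph.smul_of_tower_mem ‖Φ₀‖⁻¹ hgraph
  exact ⟨T.mem_domain_of_mem_graph hscaled, ((T.image_iff _).2 hscaled).symm⟩

/-- Gell-Mann–Low theorem: convergence of the renormalized adiabatic vectors to an
eigenvector of the (closed, densely defined) Hamiltonian. -/
theorem stmt_2
    {ℋ : Type*} [NormedAddCommGroup ℋ] [InnerProductSpace ℂ ℋ] [CompleteSpace ℋ]
    (Φfr : ℋ) (hΦfr : ‖Φfr‖ = 1)
    (T : ℋ →ₗ.[ℂ] ℋ) (hTclosed : T.IsClosed) (hTdense : Dense (T.domain : Set ℋ))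
    (S : ℝ → (ℋ →L[ℂ] ℋ)) (hSU : ∀ ε : ℝ, 0 < ε → S ε ∈ unitary (ℋ →L[ℂ] ℋ))
    (c : ℝ → ℂ) (hc : ∀ ε : ℝ, 0 < ε → c ε = ⟪Φfr, S ε Φfr⟫)
    (hc0 : ∀ ε : ℝ, 0 < ε → c ε ≠ 0)
    (Φ : ℝ → ℋ) (hΦ : ∀ ε : ℝ, 0 < ε → Φ ε = (c ε)⁻¹ • (S ε Φfr))
    (hdom : ∀ ε : ℝ, 0 < ε → Φ ε ∈ T.domain)
    (Eps : ℝ → ℂ) (Ψ : ℝ → ℋ)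
    (hTΦ : ∀ (ε : ℝ) (hε : 0 < ε), T ⟨Φ ε, hdom ε hε⟩ = Eps ε • Φ ε + Ψ ε)
    (Φ₀ : ℋ) (hΦ₀ : Φ₀ ≠ 0)
    (hlimΦ : Tendsto Φ (𝓝[>] (0 : ℝ)) (𝓝 Φ₀))
    (E : ℂ) (hlimE : Tendsto Eps (𝓝[>] (0 : ℝ)) (𝓝 E))
    (hlimΨ : Tendsto Ψ (𝓝[>] (0 : ℝ)) (𝓝 0)) :
    Tendsto (fun ε => ‖c ε‖) (𝓝[>] (0 : ℝ)) (𝓝 (1 / ‖Φ₀‖))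
    ∧ Tendsto (fun ε => ‖c ε‖ • Φ ε) (𝓝[>] (0 : ℝ)) (𝓝 (‖Φ₀‖⁻¹ • Φ₀))
    ∧ ∃ hmem : ‖Φ₀‖⁻¹ • Φ₀ ∈ T.domain,
        T ⟨‖Φ₀‖⁻¹ • Φ₀, hmem⟩ = E • (‖Φ₀‖⁻¹ • Φ₀) :=
  stmt_2_general Φfr hΦfr T hTclosed S hSU c Φ hΦ hdom Eps Ψ hTΦ Φ₀ hΦ₀ hlimΦ E hlimE hlimΨ
end

section
/- Let ℋ be a complex Hilbert space and Φ_fr ∈ ℋ a unit vector. For each ε > 0 let S_ε⁺ and S_ε⁻ be unitary operators on ℋ with c_ε^± := ⟨Φ_fr, S_ε^± Φ_fr⟩ ≠ 0; set Φ_ε^± := S_ε^± Φ_fr / c_ε^± and S_ε := (S_ε⁺)* S_ε⁻. Assume that as ε ↓ 0 the vectors Φ_ε^± converge to vectors Φ_GL^±, that Φ := Φ_GL⁺ is a unit vector, and that Φ_GL⁺ = e^{iα} Φ_GL⁻ for some α ∈ ℝ. Then ⟨Φ_fr, S_ε Φ_fr⟩ ≠ 0 for all sufficiently small ε > 0, and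 for every bounded operator B on ℋ one has ⟨Φ, BΦ⟩ = lim_{ε↓0} ⟨S_ε⁺Φ_fr, B S_ε⁻Φ_fr⟩ / ⟨Φ_fr, S_ε Φ_fr⟩. -/
/-!
Since `⟨Φ_fr, S_ε Φ_fr⟩ = ⟨S_ε⁺ Φ_fr, S_ε⁻ Φ_fr⟩` and rescaling the two vectors in
`⟨x, B y⟩ / ⟨x, y⟩` by nonzero scalars does not change the quotient, the Gell-Mann–Low
quotient equals `⟨Φ_ε⁺, B Φ_ε⁻⟩ / ⟨Φ_ε⁺, Φ_ε⁻⟩`, whose limit is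
`⟨Φ_GL⁺, B Φ_GL⁻⟩ / ⟨Φ_GL⁺, Φ_GL⁻⟩`. Since `Φ_GL⁻` is a nonzero multiple of the unit vector
`Φ_GL⁺`, the denominator is nonzero and the quotient is `⟨Φ_GL⁺, B Φ_GL⁺⟩`.
-/

open Topology Filter

section Rescaling

variable {𝕜 E : Type*} [RCLike 𝕜] [NormedAddCommGroup E] [InnerProductSpace 𝕜 E]

theorem inner_map_div_inner_smul_smul {a b : 𝕜} (ha : a ≠ 0) (hb : b ≠ 0) (B : E →L[𝕜] E)
    (x y : E) :
    inner 𝕜 (a • x) (B (b • y)) / inner 𝕜 (a • x) (b • y) = inner 𝕜 x (B y) / inner 𝕜 x y := by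
  simp only [map_smul, inner_smul_left, inner_smul_right, ← mul_assoc]
  exact mul_div_mul_left _ _ (mul_ne_zero hb ((map_ne_zero _).2 ha))

theorem inner_ne_zero_of_eq_smul {u v : E} {c : 𝕜} (hu : u ≠ 0) (h : u = c • v) :
    inner 𝕜 u v ≠ 0 := by
  intro huv
  have huu : inner 𝕜 u u = 0 := by
    rw [← mul_zero c, ← huv, ← inner_smul_right, ← h]
  exact hu (inner_self_eq_zero.1 huu)

theorem inner_map_div_inner_of_eq_smul {u v : E} {c : 𝕜} (hu : ‖u‖ = 1) (h : u = c • v)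
    (B : E →L[𝕜] E) :
    inner 𝕜 u (B v) / inner 𝕜 u v = inner 𝕜 u (B u) := by
  have hc : c ≠ 0 := by
    rintro rfl
    simp [h] at hu
  rw [← inner_map_div_inner_smul_smul one_ne_zero hc, one_smul, ← h,
    inner_self_eq_norm_sq_to_K, hu]
  simp

variable {ι : Type*} {l : Filter ι} {x y : ι → E} {a b : ι → 𝕜} {u v : E}

theorem eventually_inner_ne_zero_of_tendsto_smul
    (hx : Tendsto (fun i => a i • x i) l (𝓝 u)) (hy : Tendsto (fun i => b i • y i) l (𝓝 v))
    (huv : inner 𝕜 u v ≠ 0) :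
    ∀ᶠ i in l, inner 𝕜 (x i) (y i) ≠ 0 := by
  filter_upwards [(hx.inner hy).eventually_ne huv] with i hi hxy
  simp [inner_smul_left, inner_smul_right, hxy] at hi

theorem tendsto_inner_map_div_inner_of_tendsto_smul
    (ha : ∀ᶠ i in l, a i ≠ 0) (hb : ∀ᶠ i in l, b i ≠ 0)
    (hx : Tendsto (fun i => a i • x i) l (𝓝 u)) (hy : Tendsto (fun i => b i • y i) l (𝓝 v))
    (huv : inner 𝕜 u v ≠ 0) (B : E →L[𝕜] E) :
    Tendsto (fun i => inner 𝕜 (x i) (B (y i)) / inner 𝕜 (x i) (y i)) l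
      (𝓝 (inner 𝕜 u (B v) / inner 𝕜 u v)) := by
  have hrescaled := (hx.inner ((B.continuous.tendsto v).comp hy)).div (hx.inner hy) huv
  refine hrescaled.congr' ?_
  filter_upwards [ha, hb] with i hai hbi
  exact inner_map_div_inner_smul_smul hai hbi B (x i) (y i)

end Rescaling

local notation "⟪" x ", " y "⟫" => @inner ℂ _ _ x y

theorem stmt_3_general
    {ℋ : Type*} [NormedAddCommGroup ℋ] [InnerProductSpace ℂ ℋ] [CompleteSpace ℋ]
    (Φfr : ℋ)
    (Sp Sm : ℝ → (ℋ →L[ℂ] ℋ))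
    (hcp : ∀ ε : ℝ, 0 < ε → ⟪Φfr, Sp ε Φfr⟫ ≠ 0)
    (hcm : ∀ ε : ℝ, 0 < ε → ⟪Φfr, Sm ε Φfr⟫ ≠ 0)
    (ΦGLp ΦGLm : ℋ)
    (hlimp : Tendsto (fun ε => (⟪Φfr, Sp ε Φfr⟫)⁻¹ • (Sp ε Φfr)) (𝓝[>] (0 : ℝ)) (𝓝 ΦGLp))
    (hlimm : Tendsto (fun ε => (⟪Φfr, Sm ε Φfr⟫)⁻¹ • (Sm ε Φfr)) (𝓝[>] (0 : ℝ)) (𝓝 ΦGLm))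
    (hunit : ‖ΦGLp‖ = 1)
    (α : ℝ) (hphase : ΦGLp = Complex.exp (Complex.I * (α : ℂ)) • ΦGLm) :
    (∀ᶠ ε in 𝓝[>] (0 : ℝ),
      ⟪Φfr, ((ContinuousLinearMap.adjoint (Sp ε)) ∘L Sm ε) Φfr⟫ ≠ 0)
    ∧ ∀ B : ℋ →L[ℂ] ℋ,
        Tendsto (fun ε => ⟪Sp ε Φfr, B (Sm ε Φfr)⟫
            / ⟪Φfr, ((ContinuousLinearMap.adjoint (Sp ε)) ∘L Sm ε) Φfr⟫)
          (𝓝[>] (0 : ℝ)) (𝓝 ⟪ΦGLp, B ΦGLp⟫) := by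
  have hne : ⟪ΦGLp, ΦGLm⟫ ≠ 0 :=
    inner_ne_zero_of_eq_smul (ne_zero_of_norm_ne_zero (hunit ▸ one_ne_zero)) hphase
  have hscalar (S : ℝ → ℋ →L[ℂ] ℋ) (hc : ∀ ε : ℝ, 0 < ε → ⟪Φfr, S ε Φfr⟫ ≠ 0) :
      ∀ᶠ ε in 𝓝[>] (0 : ℝ), (⟪Φfr, S ε Φfr⟫)⁻¹ ≠ 0 :=
    eventually_mem_nhdsWithin.mono fun ε hε => inv_ne_zero (hc ε hε)
  simp only [ContinuousLinearMap.comp_apply, ContinuousLinearMap.adjoint_inner_right]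
  refine ⟨eventually_inner_ne_zero_of_tendsto_smul hlimp hlimm hne, fun B => ?_⟩
  rw [← inner_map_div_inner_of_eq_smul hunit hphase B]
  exact tendsto_inner_map_div_inner_of_tendsto_smul (hscalar Sp hcp) (hscalar Sm hcm)
    hlimp hlimm hne B

/-- Gell-Mann–Low: expectation values in the interacting vector computed from the
adiabatic Møller and scattering operators. -/
theorem stmt_3
    {ℋ : Type*} [NormedAddCommGroup ℋ] [InnerProductSpace ℂ ℋ] [CompleteSpace ℋ]
    (Φfr : ℋ) (hΦfr : ‖Φfr‖ = 1)
    (Sp Sm : ℝ → (ℋ →L[ℂ] ℋ))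
    (hSp : ∀ ε : ℝ, 0 < ε → Sp ε ∈ unitary (ℋ →L[ℂ] ℋ))
    (hSm : ∀ ε : ℝ, 0 < ε → Sm ε ∈ unitary (ℋ →L[ℂ] ℋ))
    (hcp : ∀ ε : ℝ, 0 < ε → ⟪Φfr, Sp ε Φfr⟫ ≠ 0)
    (hcm : ∀ ε : ℝ, 0 < ε → ⟪Φfr, Sm ε Φfr⟫ ≠ 0)
    (ΦGLp ΦGLm : ℋ)
    (hlimp : Tendsto (fun ε => (⟪Φfr, Sp ε Φfr⟫)⁻¹ • (Sp ε Φfr)) (𝓝[>] (0 : ℝ)) (𝓝 ΦGLp))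
    (hlimm : Tendsto (fun ε => (⟪Φfr, Sm ε Φfr⟫)⁻¹ • (Sm ε Φfr)) (𝓝[>] (0 : ℝ)) (𝓝 ΦGLm))
    (hunit : ‖ΦGLp‖ = 1)
    (α : ℝ) (hphase : ΦGLp = Complex.exp (Complex.I * (α : ℂ)) • ΦGLm) :
    (∀ᶠ ε in 𝓝[>] (0 : ℝ),
      ⟪Φfr, ((ContinuousLinearMap.adjoint (Sp ε)) ∘L Sm ε) Φfr⟫ ≠ 0)
    ∧ ∀ B : ℋ →L[ℂ] ℋ,
        Tendsto (fun ε => ⟪Sp ε Φfr, B (Sm ε Φfr)⟫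
            / ⟪Φfr, ((ContinuousLinearMap.adjoint (Sp ε)) ∘L Sm ε) Φfr⟫)
          (𝓝[>] (0 : ℝ)) (𝓝 ⟪ΦGLp, B ΦGLp⟫) :=
  stmt_3_general Φfr Sp Sm hcp hcm ΦGLp ΦGLm hlimp hlimm hunit α hphase
end

section
/- Let ℋ be a complex Hilbert space, H_fr and V bounded self-adjoint operators on ℋ, and fix λ > 0; put H := H_fr + λV. Let Φ_fr ∈ ℋ be a unit vector with H_frΦ_fr = E_frΦ_fr, E_fr ∈ ℝ. For each ε > 0 let λ ↦ S_ε⁺(λ) and λ ↦ S_ε⁻(λ) be families of unitary operators, differentiable in operator norm in λ on a neighborhood of the fixed λ, satisfying −iελ ∂_λS_ε⁺ = (H_fr + λV) S_ε⁺ − S_ε⁺ H_fr and iελ ∂_λS_ε⁻ = (H_fr + λV) S_ε⁻ − S_ε⁻ H_fr. Assume c_ε^± := ⟨Φ_fr, S_ε^±Φ_fr⟩ ≠ 0, that Φ_ε^± := S_ε^±Φ_fr/c_ε^± converge as ε ↓ 0 to vectors Φ_GL^± with Φ := Φ_GL⁺ a unit vector and Φ_GL⁺ = e^{iα}Φ_GL⁻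 for some α ∈ ℝ, and that c_ε := ⟨Φ_fr, (S_ε⁺)*S_ε⁻Φ_fr⟩ ≠ 0 for λ in that neighborhood. Set E := ⟨Φ, HΦ⟩. Then Sucher's formula holds: E − E_fr = lim_{ε↓0} (iελ/2) · (∂_λ c_ε)/c_ε, all quantities being evaluated at the fixed λ. -/
/-!
Write `a := S⁺Φ_fr`, `b := S⁻Φ_fr`, so that `c_ε = ⟪a, b⟫`. Applied to the eigenvector `Φ_fr`, the
two adiabatic equations become `iελ ∂b = (H - E_fr) b` and `-iελ ∂a = (H - E_fr) a`. Since `iελ`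
is purely imaginary and `H` is self-adjoint, both terms of `iελ ∂c_ε = iελ (⟪a, ∂b⟫ + ⟪∂a, b⟫)`
equal `⟪a, (H - E_fr) b⟫`, whence `(iελ/2) ∂c_ε / c_ε = ⟪a, H b⟫ / ⟪a, b⟫ - E_fr` exactly, for
every `ε`. The quotient on the right does not see the normalisations `c_ε^±`, so it equals
`⟪Φ_ε⁺, H Φ_ε⁻⟫ / ⟪Φ_ε⁺, Φ_ε⁻⟫`, which tends to `⟪Φ, H Φ⟫` because `Φ_GL⁻` is a nonzero multiple
of the unit vector `Φ`. The same limit gives `⟪Φ_ε⁺, Φ_ε⁻⟫ ≠ 0`, hence `c_ε^± ≠ 0` and `c_ε ≠ 0`,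
for small `ε`.
-/

open Topology Filter ContinuousLinearMap

local notation "⟪" x ", " y "⟫" => @inner ℂ _ _ x y

section

variable {ℋ : Type*} [NormedAddCommGroup ℋ] [InnerProductSpace ℂ ℋ]

lemma ne_zero_of_inner_smul_smul_ne_zero {r s : ℂ} {x y : ℋ} (h : ⟪r • x, s • y⟫ ≠ 0) :
    r ≠ 0 ∧ s ≠ 0 ∧ ⟪x, y⟫ ≠ 0 := by
  simp_all

lemma inner_map_smul_div_inner_smul_smul (H : ℋ →L[ℂ] ℋ) {r s : ℂ} (hr : r ≠ 0) (hs : s ≠ 0)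
    (x y : ℋ) : ⟪r • x, H (s • y)⟫ / ⟪r • x, s • y⟫ = ⟪x, H y⟫ / ⟪x, y⟫ := by
  simp only [map_smul, inner_smul_left, inner_smul_right, ← mul_assoc]
  exact mul_div_mul_left _ _ (mul_ne_zero hs (by simpa using hr))

lemma smul_apply_eq_sub_smul_of_apply_eq_smul {H H₀ S S' : ℋ →L[ℂ] ℋ} {κ E : ℂ} {Φ : ℋ}
    (hS : κ • S' = H ∘L S - S ∘L H₀) (hΦ : H₀ Φ = E • Φ) :
    κ • S' Φ = H (S Φ) - E • S Φ := by
  simpa [hΦ] using congrArg (fun T : ℋ →L[ℂ] ℋ => T Φ) hS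

variable [CompleteSpace ℋ]

lemma hasDerivAt_inner_adjoint_comp_apply {S T : ℝ → ℋ →L[ℂ] ℋ} {S' T' : ℋ →L[ℂ] ℋ} {l : ℝ}
    (hS : HasDerivAt S S' l) (hT : HasDerivAt T T' l) (x : ℋ) :
    HasDerivAt (fun t => ⟪x, (adjoint (S t) ∘L T t) x⟫) (⟪S l x, T' x⟫ + ⟪S' x, T l x⟫) l := by
  have happly : ∀ {U : ℝ → ℋ →L[ℂ] ℋ} {U'}, HasDerivAt U U' l →
      HasDerivAt (fun t => U t x) (U' x) l := fun hU => ((apply ℂ ℋ x).restrictScalars ℝ).hasFDerivAt.comp_hasDerivAt l hU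
  simpa only [comp_apply, adjoint_inner_right] using (happly hS).inner ℂ (happly hT)

lemma mul_inner_add_inner_eq {H : ℋ →L[ℂ] ℋ} (hH : IsSelfAdjoint H) {κ : ℂ}
    (hκ : starRingEnd ℂ κ = -κ) {E : ℝ} {a b a' b' : ℋ} (ha : (-κ) • a' = H a - (E : ℂ) • a)
    (hb : κ • b' = H b - (E : ℂ) • b) :
    κ * (⟪a, b'⟫ + ⟪a', b⟫) = 2 * (⟪a, H b⟫ - E * ⟪a, b⟫) := by
  have hright : κ * ⟪a, b'⟫ = ⟪a, H b⟫ - E * ⟪a, b⟫ := by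
    rw [← inner_smul_right, hb, inner_sub_right, inner_smul_right]
  have hleft : κ * ⟪a', b⟫ = ⟪a, H b⟫ - E * ⟪a, b⟫ := by
    rw [← neg_neg κ, ← hκ, ← map_neg, ← inner_smul_left, ha, inner_sub_left, inner_smul_left,
      Complex.conj_ofReal]
    exact congrArg (· - _) (hH.isSymmetric a b)
  rw [mul_add, hright, hleft]
  ring

theorem adiabatic_log_deriv_eq {H H₀ : ℋ →L[ℂ] ℋ} (hH : IsSelfAdjoint H) {E : ℝ} {Φ : ℋ}
    (hΦ : H₀ Φ = (E : ℂ) • Φ) {S T : ℝ → ℋ →L[ℂ] ℋ} {S' T' : ℋ →L[ℂ] ℋ} {l : ℝ} {κ : ℂ}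
    (hκ : starRingEnd ℂ κ = -κ) (hS : HasDerivAt S S' l) (hT : HasDerivAt T T' l)
    (hS' : (-κ) • S' = H ∘L S l - S l ∘L H₀) (hT' : κ • T' = H ∘L T l - T l ∘L H₀)
    (hc : ⟪S l Φ, T l Φ⟫ ≠ 0) :
    κ / 2 * deriv (fun t => ⟪Φ, (adjoint (S t) ∘L T t) Φ⟫) l / ⟪Φ, (adjoint (S l) ∘L T l) Φ⟫
      = ⟪S l Φ, H (T l Φ)⟫ / ⟪S l Φ, T l Φ⟫ - E := by
  have hsum := mul_inner_add_inner_eq hH hκ (smul_apply_eq_sub_smul_of_apply_eq_smul hS' hΦ)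
    (smul_apply_eq_sub_smul_of_apply_eq_smul hT' hΦ)
  rw [(hasDerivAt_inner_adjoint_comp_apply hS hT Φ).deriv, comp_apply, adjoint_inner_right]
  rw [eq_sub_iff_add_eq, div_add' _ _ _ hc, div_left_inj' hc]
  linear_combination hsum / 2

end

theorem stmt_4_general
    {ℋ : Type*} [NormedAddCommGroup ℋ] [InnerProductSpace ℂ ℋ] [CompleteSpace ℋ]
    (Hfr V : ℋ →L[ℂ] ℋ) (hHfr : IsSelfAdjoint Hfr) (hV : IsSelfAdjoint V)
    (lam : ℝ) (Φfr : ℋ) (Efr : ℝ) (hEfr : Hfr Φfr = (Efr : ℂ) • Φfr)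
    (Sp Sm Sp' Sm' : ℝ → ℝ → ℋ →L[ℂ] ℋ)
    (Unb : Set ℝ) (hUnb : Unb ∈ 𝓝 lam)
    (hSp : ∀ ε : ℝ, 0 < ε → ∀ l ∈ Unb, HasDerivAt (Sp ε) (Sp' ε l) l)
    (hSm : ∀ ε : ℝ, 0 < ε → ∀ l ∈ Unb, HasDerivAt (Sm ε) (Sm' ε l) l)
    (hODEp : ∀ ε : ℝ, 0 < ε → ∀ l ∈ Unb,
      (-(Complex.I * (ε : ℂ) * (l : ℂ))) • Sp' ε l
        = (Hfr + (l : ℂ) • V) ∘L Sp ε l - Sp ε l ∘L Hfr)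
    (hODEm : ∀ ε : ℝ, 0 < ε → ∀ l ∈ Unb,
      (Complex.I * (ε : ℂ) * (l : ℂ)) • Sm' ε l
        = (Hfr + (l : ℂ) • V) ∘L Sm ε l - Sm ε l ∘L Hfr)
    (ΦGLp ΦGLm : ℋ)
    (hlimp : Tendsto (fun ε => (⟪Φfr, Sp ε lam Φfr⟫)⁻¹ • (Sp ε lam Φfr))
      (𝓝[>] (0 : ℝ)) (𝓝 ΦGLp))
    (hlimm : Tendsto (fun ε => (⟪Φfr, Sm ε lam Φfr⟫)⁻¹ • (Sm ε lam Φfr))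
      (𝓝[>] (0 : ℝ)) (𝓝 ΦGLm))
    (hunit : ‖ΦGLp‖ = 1)
    (α : ℝ) (hphase : ΦGLp = Complex.exp (Complex.I * (α : ℂ)) • ΦGLm) :
    Tendsto (fun ε : ℝ =>
        (Complex.I * (ε : ℂ) * (lam : ℂ) / 2)
          * deriv (fun l => ⟪Φfr, ((ContinuousLinearMap.adjoint (Sp ε l)) ∘L Sm ε l) Φfr⟫) lam
          / ⟪Φfr, ((ContinuousLinearMap.adjoint (Sp ε lam)) ∘L Sm ε lam) Φfr⟫)
      (𝓝[>] (0 : ℝ))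
      (𝓝 (⟪ΦGLp, (Hfr + (lam : ℂ) • V) ΦGLp⟫ - (Efr : ℂ))) := by
  have hlamU : lam ∈ Unb := mem_of_mem_nhds hUnb
  set H := Hfr + (lam : ℂ) • V
  have hH : IsSelfAdjoint H := hHfr.add (.smul (Complex.conj_ofReal lam) hV)
  have he : Complex.exp (Complex.I * α) ≠ 0 := Complex.exp_ne_zero _
  have hGLm : ΦGLm = (Complex.exp (Complex.I * α))⁻¹ • ΦGLp := by rw [hphase, inv_smul_smul₀ he]
  have hΦ : ⟪ΦGLp, ΦGLp⟫ = 1 := inner_self_eq_one_of_norm_eq_one hunit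
  have hGL : ⟪ΦGLp, ΦGLm⟫ ≠ 0 := by
    rw [hGLm, inner_smul_right, hΦ, mul_one]
    exact inv_ne_zero he
  have hval : ⟪ΦGLp, H ΦGLm⟫ / ⟪ΦGLp, ΦGLm⟫ = ⟪ΦGLp, H ΦGLp⟫ := by
    have := inner_map_smul_div_inner_smul_smul H one_ne_zero (inv_ne_zero he) ΦGLp ΦGLp
    rwa [one_smul, ← hGLm, hΦ, div_one] at this
  have hlim := (hlimp.inner ((H.continuous.tendsto _).comp hlimm)).div (hlimp.inner hlimm) hGL
  rw [hval] at hlim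
  refine (hlim.sub_const (Efr : ℂ)).congr' ?_
  filter_upwards [self_mem_nhdsWithin, (hlimp.inner hlimm).eventually_ne hGL] with ε hε hne
  obtain ⟨hr, hs, hc⟩ := ne_zero_of_inner_smul_smul_ne_zero hne
  rw [Pi.div_apply, Function.comp_apply, inner_map_smul_div_inner_smul_smul H hr hs,
    adiabatic_log_deriv_eq hH hEfr (by simp) (hSp ε hε lam hlamU) (hSm ε hε lam hlamU)
      (hODEp ε hε lam hlamU) (hODEm ε hε lam hlamU) hc]

/-- Sucher's formula for the energy shift in the Gell-Mann–Low adiabatic switching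
scheme. -/
theorem stmt_4
    {ℋ : Type*} [NormedAddCommGroup ℋ] [InnerProductSpace ℂ ℋ] [CompleteSpace ℋ]
    (Hfr V : ℋ →L[ℂ] ℋ) (hHfr : IsSelfAdjoint Hfr) (hV : IsSelfAdjoint V)
    (lam : ℝ) (hlam : 0 < lam)
    (Φfr : ℋ) (hΦfr : ‖Φfr‖ = 1)
    (Efr : ℝ) (hEfr : Hfr Φfr = (Efr : ℂ) • Φfr)
    (Sp Sm Sp' Sm' : ℝ → ℝ → ℋ →L[ℂ] ℋ)
    (Unb : Set ℝ) (hUnb : Unb ∈ 𝓝 lam)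
    (hSpU : ∀ ε : ℝ, 0 < ε → ∀ l ∈ Unb, Sp ε l ∈ unitary (ℋ →L[ℂ] ℋ))
    (hSmU : ∀ ε : ℝ, 0 < ε → ∀ l ∈ Unb, Sm ε l ∈ unitary (ℋ →L[ℂ] ℋ))
    (hSp : ∀ ε : ℝ, 0 < ε → ∀ l ∈ Unb, HasDerivAt (Sp ε) (Sp' ε l) l)
    (hSm : ∀ ε : ℝ, 0 < ε → ∀ l ∈ Unb, HasDerivAt (Sm ε) (Sm' ε l) l)
    (hODEp : ∀ ε : ℝ, 0 < ε → ∀ l ∈ Unb,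
      (-(Complex.I * (ε : ℂ) * (l : ℂ))) • Sp' ε l
        = (Hfr + (l : ℂ) • V) ∘L Sp ε l - Sp ε l ∘L Hfr)
    (hODEm : ∀ ε : ℝ, 0 < ε → ∀ l ∈ Unb,
      (Complex.I * (ε : ℂ) * (l : ℂ)) • Sm' ε l
        = (Hfr + (l : ℂ) • V) ∘L Sm ε l - Sm ε l ∘L Hfr)
    (hcp : ∀ ε : ℝ, 0 < ε → ⟪Φfr, Sp ε lam Φfr⟫ ≠ 0)
    (hcm : ∀ ε : ℝ, 0 < ε → ⟪Φfr, Sm ε lam Φfr⟫ ≠ 0)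
    (ΦGLp ΦGLm : ℋ)
    (hlimp : Tendsto (fun ε => (⟪Φfr, Sp ε lam Φfr⟫)⁻¹ • (Sp ε lam Φfr))
      (𝓝[>] (0 : ℝ)) (𝓝 ΦGLp))
    (hlimm : Tendsto (fun ε => (⟪Φfr, Sm ε lam Φfr⟫)⁻¹ • (Sm ε lam Φfr))
      (𝓝[>] (0 : ℝ)) (𝓝 ΦGLm))
    (hunit : ‖ΦGLp‖ = 1)
    (α : ℝ) (hphase : ΦGLp = Complex.exp (Complex.I * (α : ℂ)) • ΦGLm)
    (hcne : ∀ ε : ℝ, 0 < ε → ∀ l ∈ Unb,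
      ⟪Φfr, ((ContinuousLinearMap.adjoint (Sp ε l)) ∘L Sm ε l) Φfr⟫ ≠ 0) :
    Tendsto (fun ε : ℝ =>
        (Complex.I * (ε : ℂ) * (lam : ℂ) / 2)
          * deriv (fun l => ⟪Φfr, ((ContinuousLinearMap.adjoint (Sp ε l)) ∘L Sm ε l) Φfr⟫) lam
          / ⟪Φfr, ((ContinuousLinearMap.adjoint (Sp ε lam)) ∘L Sm ε lam) Φfr⟫)
      (𝓝[>] (0 : ℝ))
      (𝓝 (⟪ΦGLp, (Hfr + (lam : ℂ) • V) ΦGLp⟫ - (Efr : ℂ))) :=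
  stmt_4_general Hfr V hHfr hV lam Φfr Efr hEfr Sp Sm Sp' Sm' Unb hUnb hSp hSm hODEp hODEm ΦGLp ΦGLm
    hlimp hlimm hunit α hphase
end

section
/- Let ℋ be a complex Hilbert space, H_fr and V bounded self-adjoint operators on ℋ, σ ∈ {1,−1}, and fix λ > 0; put H := H_fr + λV. Let Φ_fr be a unit vector with H_frΦ_fr = E_frΦ_fr, E_fr ∈ ℝ. For each ε > 0 let λ ↦ S_ε(λ) be a family of unitary operators, differentiable in operator norm on a neighborhood of the fixed λ, satisfying σ iελ ∂_λS_ε = (H_fr + λV) S_ε − S_ε H_fr, and assume c_ε(λ) := ⟨Φ_fr, S_ε(λ)Φ_fr⟩ ≠ 0 on that neighborhood; set E_ε := ⟨Φ_fr, H S_εΦ_fr⟩/c_ε and T_ε := (|c_ε|/c_ε) S_ε. Assume that at the fixed λ: (i) there is a bounded operator S_GL with ⟨φ, T_εψ⟩ → ⟨φ, S_GLψ⟩ for all φ, ψ ∈ ℋ as ε ↓ 0; (ii) ⟨φ, ελ(∂_λT_ε)ψ⟩ → 0 for all φ, ψ ∈ ℋ; (iii) E_ε → E for some E ∈ ℂ.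 Then the Gell-Mann–Low Møller operator S_GL satisfies the intertwining relation S_GL (H_fr − E_fr) = (H − Re E) S_GL. -/
/-!
Write `c = ⟨Φ_fr, S Φ_fr⟩` and `κ = σ i ε λ`. Sandwiching the adiabatic equation between `Φ_fr`
gives `κ c'/c = E_ε - E_fr`. The phase `|c|/c` has logarithmic derivative `-i Im (c'/c)`, and
since `κ` is purely imaginary this turns `E_ε - E_fr` into its real part:
`κ ∂_λ T_ε = (E_fr - Re E_ε) T_ε + H T_ε - T_ε H_fr`.
Pair both sides with `φ, ψ` and let `ε ↓ 0`: the left side tends to `0` by (ii), and the right side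
tends to `⟨φ, ((E_fr - Re E) S_GL + H S_GL - S_GL H_fr) ψ⟩` by (i) and (iii), where `H` is moved onto
`φ` through its adjoint.
-/

open Topology Filter
open scoped InnerProductSpace

theorem HasDerivAt.norm {F : Type*} [NormedAddCommGroup F] [InnerProductSpace ℝ F]
    {f : ℝ → F} {f' : F} {x : ℝ} (hf : HasDerivAt f f' x) (h0 : f x ≠ 0) :
    HasDerivAt (‖f ·‖) (⟪f x, f'⟫_ℝ / ‖f x‖) x := by
  have h := hf.norm_sq.sqrt (by positivity)
  simp only [Real.sqrt_sq (norm_nonneg _)] at h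
  convert h using 1
  field_simp

local notation "⟪" x ", " y "⟫" => @inner ℂ _ _ x y

namespace Complex

theorem hasDerivAt_norm_div_self {c : ℝ → ℂ} {c' : ℂ} {x : ℝ} (hc : HasDerivAt c c' x)
    (h0 : c x ≠ 0) :
    HasDerivAt (fun l => (‖c l‖ : ℂ) / c l) (-(I * (c' / c x).im) * (‖c x‖ / c x)) x := by
  have h := (hc.norm h0).ofReal_comp.div hc h0
  refine h.congr_deriv ?_
  obtain ⟨z, rfl⟩ : ∃ z, c' = z * c x := ⟨c' / c x, (div_mul_cancel₀ _ h0).symm⟩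
  have hn : (‖c x‖ : ℂ) ≠ 0 := by simpa using h0
  have hre : (z * c x * (starRingEnd ℂ) (c x)).re = z.re * ‖c x‖ ^ 2 := by
    rw [mul_assoc, mul_conj, normSq_eq_norm_sq, re_mul_ofReal]
  rw [Complex.inner, hre]
  field_simp
  push_cast
  linear_combination (‖c x‖ : ℂ) * re_add_im z

end Complex

open Complex

section PhaseNormalized

variable {ℋ : Type*} [NormedAddCommGroup ℋ] [InnerProductSpace ℂ ℋ]

noncomputable def phaseNormalized (Φ : ℋ) (S : ℋ →L[ℂ] ℋ) : ℋ →L[ℂ] ℋ :=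
  ((‖⟪Φ, S Φ⟫‖ : ℂ) / ⟪Φ, S Φ⟫) • S

theorem smul_deriv_phaseNormalized (H H₀ : ℋ →L[ℂ] ℋ) {S : ℝ → ℋ →L[ℂ] ℋ}
    {S' : ℋ →L[ℂ] ℋ} {Φ : ℋ} {e r x : ℝ} (hS : HasDerivAt S S' x)
    (hODE : (I * r) • S' = H ∘L S x - S x ∘L H₀) (hΦ : H₀ Φ = (e : ℂ) • Φ)
    (h0 : ⟪Φ, S x Φ⟫ ≠ 0) :
    (I * r) • deriv (fun l => phaseNormalized Φ (S l)) x
      = ((e : ℂ) - ((⟪Φ, H (S x Φ)⟫ / ⟪Φ, S x Φ⟫).re : ℂ)) • phaseNormalized Φ (S x)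
        + H ∘L phaseNormalized Φ (S x) - phaseNormalized Φ (S x) ∘L H₀ := by
  set c := ⟪Φ, S x Φ⟫
  set z := ⟪Φ, S' Φ⟫ / c
  have hc : HasDerivAt (fun l => ⟪Φ, S l Φ⟫) ⟪Φ, S' Φ⟫ x := by
    have hL := (((innerSL ℂ Φ).comp (ContinuousLinearMap.apply ℂ ℋ Φ)).restrictScalars ℝ)
      |>.hasFDerivAt.comp_hasDerivAt x hS
    simpa [Function.comp_def] using hL
  have hsandwich : (I * r) * z = ⟪Φ, H (S x Φ)⟫ / c - e := by
    have h := congrArg (fun A : ℋ →L[ℂ] ℋ => ⟪Φ, A Φ⟫) hODE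
    simp only [smul_apply, sub_apply, ContinuousLinearMap.comp_apply, inner_smul_right,
      inner_sub_right, hΦ, map_smul] at h
    rw [← mul_div_assoc, h, sub_div, mul_div_cancel_right₀ _ h0]
  have hscalar : (I * r) * -(I * z.im) = e - ((⟪Φ, H (S x Φ)⟫ / c).re : ℂ) := by
    have hre : r * z.im = e - (⟪Φ, H (S x Φ)⟫ / c).re := by
      have h := congrArg re hsandwich
      simp only [mul_re, mul_im, I_re, I_im, ofReal_re, ofReal_im, sub_re] at h
      linarith
    have hreC := congrArg ((↑) : ℝ → ℂ) hre
    push_cast at hreC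
    linear_combination (-(r : ℂ) * z.im) * I_sq + hreC
  have hT : HasDerivAt (fun l => phaseNormalized Φ (S l))
      ((‖c‖ / c : ℂ) • S' + (-(I * z.im) * (‖c‖ / c)) • S x) x :=
    (hasDerivAt_norm_div_self hc h0).smul hS
  rw [hT.deriv]
  calc (I * r) • ((‖c‖ / c : ℂ) • S' + (-(I * z.im) * (‖c‖ / c)) • S x)
      = ((I * r) * -(I * z.im)) • phaseNormalized Φ (S x) + (‖c‖ / c : ℂ) • ((I * r) • S') := by
        unfold phaseNormalized; module
    _ = _ := by
        rw [hscalar, hODE]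
        unfold phaseNormalized
        simp only [ContinuousLinearMap.comp_smul, ContinuousLinearMap.smul_comp]
        module

end PhaseNormalized

section WeakOperatorLimits

variable {α 𝕜 E : Type*} [RCLike 𝕜] [NormedAddCommGroup E] [InnerProductSpace 𝕜 E]

def TendstoWeakOp (A : α → E →L[𝕜] E) (l : Filter α) (B : E →L[𝕜] E) : Prop :=
  ∀ φ ψ : E, Tendsto (fun a => ⟪φ, A a ψ⟫_𝕜) l (𝓝 ⟪φ, B ψ⟫_𝕜)

namespace TendstoWeakOp

variable {A A' : α → E →L[𝕜] E} {l : Filter α} {B B' : E →L[𝕜] E}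

theorem unique [l.NeBot] (h : TendstoWeakOp A l B) (h' : TendstoWeakOp A l B') : B = B' :=
  ContinuousLinearMap.ext fun ψ => ext_inner_left 𝕜 fun φ =>
    tendsto_nhds_unique (h φ ψ) (h' φ ψ)

theorem congr' (h : TendstoWeakOp A l B) (hAA' : A =ᶠ[l] A') : TendstoWeakOp A' l B :=
  fun φ ψ => (h φ ψ).congr' (hAA'.mono fun a ha => by rw [ha])

theorem add (h : TendstoWeakOp A l B) (h' : TendstoWeakOp A' l B') :
    TendstoWeakOp (fun a => A a + A' a) l (B + B') := fun φ ψ => by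
  simpa only [add_apply, inner_add_right] using (h φ ψ).add (h' φ ψ)

theorem sub (h : TendstoWeakOp A l B) (h' : TendstoWeakOp A' l B') :
    TendstoWeakOp (fun a => A a - A' a) l (B - B') := fun φ ψ => by
  simpa only [sub_apply, inner_sub_right] using (h φ ψ).sub (h' φ ψ)

theorem smul {f : α → 𝕜} {k : 𝕜} (hf : Tendsto f l (𝓝 k)) (h : TendstoWeakOp A l B) :
    TendstoWeakOp (fun a => f a • A a) l (k • B) := fun φ ψ => by
  simpa only [smul_apply, inner_smul_right] using hf.mul (h φ ψ)

theorem comp_right (h : TendstoWeakOp A l B) (K : E →L[𝕜] E) :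
    TendstoWeakOp (fun a => A a ∘L K) l (B ∘L K) := fun φ ψ => h φ (K ψ)

theorem comp_left [CompleteSpace E] (h : TendstoWeakOp A l B) (K : E →L[𝕜] E) :
    TendstoWeakOp (fun a => K ∘L A a) l (K ∘L B) := fun φ ψ => by
  simpa only [ContinuousLinearMap.comp_apply, ContinuousLinearMap.adjoint_inner_left]
    using h (ContinuousLinearMap.adjoint K φ) ψ

end TendstoWeakOp

end WeakOperatorLimits

theorem stmt_5_general
    {ℋ : Type*} [NormedAddCommGroup ℋ] [InnerProductSpace ℂ ℋ] [CompleteSpace ℋ]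
    (Hfr V : ℋ →L[ℂ] ℋ)
    (σ : ℝ)
    (lam : ℝ)
    (Φfr : ℋ)
    (Efr : ℝ) (hEfr : Hfr Φfr = (Efr : ℂ) • Φfr)
    (S S' : ℝ → ℝ → ℋ →L[ℂ] ℋ)
    (Unb : Set ℝ) (hUnb : Unb ∈ 𝓝 lam)
    (hS : ∀ ε : ℝ, 0 < ε → ∀ l ∈ Unb, HasDerivAt (S ε) (S' ε l) l)
    (hODE : ∀ ε : ℝ, 0 < ε → ∀ l ∈ Unb,
      ((σ : ℂ) * Complex.I * (ε : ℂ) * (l : ℂ)) • S' ε l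
        = (Hfr + (l : ℂ) • V) ∘L S ε l - S ε l ∘L Hfr)
    (c : ℝ → ℝ → ℂ) (hc : ∀ ε l : ℝ, c ε l = ⟪Φfr, S ε l Φfr⟫)
    (hc0 : ∀ ε : ℝ, 0 < ε → ∀ l ∈ Unb, c ε l ≠ 0)
    (Eps : ℝ → ℂ)
    (hEps : ∀ ε : ℝ, 0 < ε →
      Eps ε = ⟪Φfr, (Hfr + (lam : ℂ) • V) (S ε lam Φfr)⟫ / c ε lam)
    (T : ℝ → ℝ → ℋ →L[ℂ] ℋ)
    (hT : ∀ ε l : ℝ, T ε l = (((‖c ε l‖ : ℝ) : ℂ) / c ε l) • S ε l)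
    (SGL : ℋ →L[ℂ] ℋ)
    (hweak : ∀ φ ψ : ℋ,
      Tendsto (fun ε => ⟪φ, (T ε lam) ψ⟫) (𝓝[>] (0 : ℝ)) (𝓝 ⟪φ, SGL ψ⟫))
    (hweak' : ∀ φ ψ : ℋ,
      Tendsto (fun ε : ℝ => ⟪φ, (((ε * lam : ℝ) : ℂ) • deriv (fun l => T ε l) lam) ψ⟫)
        (𝓝[>] (0 : ℝ)) (𝓝 0))
    (E : ℂ) (hE : Tendsto Eps (𝓝[>] (0 : ℝ)) (𝓝 E)) :
    SGL ∘L (Hfr - (Efr : ℂ) • (1 : ℋ →L[ℂ] ℋ))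
      = (Hfr + (lam : ℂ) • V - ((E.re : ℝ) : ℂ) • (1 : ℋ →L[ℂ] ℋ)) ∘L SGL := by
  set H := Hfr + (lam : ℂ) • V
  have hlamU : lam ∈ Unb := mem_of_mem_nhds hUnb
  have hTS : ∀ ε, (fun l => T ε l) = fun l => phaseNormalized Φfr (S ε l) :=
    fun ε => funext fun l => by rw [hT, hc]; rfl
  have hkey : ∀ᶠ ε in 𝓝[>] (0 : ℝ),
      ((σ : ℂ) * I) • (((ε * lam : ℝ) : ℂ) • deriv (fun l => T ε l) lam)
        = ((Efr : ℂ) - ((Eps ε).re : ℂ)) • T ε lam + H ∘L T ε lam - T ε lam ∘L Hfr := by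
    filter_upwards [self_mem_nhdsWithin] with ε (hε : 0 < ε)
    have hODE' : (I * ((σ * ε * lam : ℝ) : ℂ)) • S' ε lam = H ∘L S ε lam - S ε lam ∘L Hfr := by
      rw [← hODE ε hε lam hlamU]; push_cast; ring_nf
    have h0 : ⟪Φfr, S ε lam Φfr⟫ ≠ 0 := hc ε lam ▸ hc0 ε hε lam hlamU
    have hκ : (σ : ℂ) * I * ((ε * lam : ℝ) : ℂ) = I * ((σ * ε * lam : ℝ) : ℂ) := by
      push_cast; ring
    rw [smul_smul, hκ, hTS, congrFun (hTS ε) lam, hEps ε hε, hc]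
    exact smul_deriv_phaseNormalized H Hfr (hS ε hε lam hlamU) hODE' hEfr h0
  have hTlim : TendstoWeakOp (fun ε => T ε lam) (𝓝[>] 0) SGL := hweak
  have hdiff : TendstoWeakOp (fun ε : ℝ => ((ε * lam : ℝ) : ℂ) • deriv (fun l => T ε l) lam)
      (𝓝[>] 0) 0 := fun φ ψ => by
    simpa only [zero_apply, inner_zero_right] using hweak' φ ψ
  have hRe : Tendsto (fun ε => ((Eps ε).re : ℂ)) (𝓝[>] 0) (𝓝 (E.re : ℂ)) :=
    (continuous_ofReal.comp continuous_re).continuousAt.tendsto.comp hE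
  have hzero := ((hdiff.smul (tendsto_const_nhds (x := (σ : ℂ) * I))).congr' hkey).unique
    (((hTlim.smul (tendsto_const_nhds.sub hRe)).add (hTlim.comp_left H)).sub
      (hTlim.comp_right Hfr))
  rw [smul_zero] at hzero
  simp only [ContinuousLinearMap.comp_sub, ContinuousLinearMap.sub_comp,
    ContinuousLinearMap.comp_smul, ContinuousLinearMap.smul_comp,
    ContinuousLinearMap.one_def, ContinuousLinearMap.comp_id, ContinuousLinearMap.id_comp]
  linear_combination (norm := module) hzero

/-- The Gell-Mann–Low Møller operator intertwines the free and the interacting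
Hamiltonians (up to the energy shift). -/
theorem stmt_5
    {ℋ : Type*} [NormedAddCommGroup ℋ] [InnerProductSpace ℂ ℋ] [CompleteSpace ℋ]
    (Hfr V : ℋ →L[ℂ] ℋ) (hHfr : IsSelfAdjoint Hfr) (hV : IsSelfAdjoint V)
    (σ : ℝ) (hσ : σ = 1 ∨ σ = -1)
    (lam : ℝ) (hlam : 0 < lam)
    (Φfr : ℋ) (hΦfr : ‖Φfr‖ = 1)
    (Efr : ℝ) (hEfr : Hfr Φfr = (Efr : ℂ) • Φfr)
    (S S' : ℝ → ℝ → ℋ →L[ℂ] ℋ)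
    (Unb : Set ℝ) (hUnb : Unb ∈ 𝓝 lam)
    (hSU : ∀ ε : ℝ, 0 < ε → ∀ l ∈ Unb, S ε l ∈ unitary (ℋ →L[ℂ] ℋ))
    (hS : ∀ ε : ℝ, 0 < ε → ∀ l ∈ Unb, HasDerivAt (S ε) (S' ε l) l)
    (hODE : ∀ ε : ℝ, 0 < ε → ∀ l ∈ Unb,
      ((σ : ℂ) * Complex.I * (ε : ℂ) * (l : ℂ)) • S' ε l
        = (Hfr + (l : ℂ) • V) ∘L S ε l - S ε l ∘L Hfr)
    (c : ℝ → ℝ → ℂ) (hc : ∀ ε l : ℝ, c ε l = ⟪Φfr, S ε l Φfr⟫)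
    (hc0 : ∀ ε : ℝ, 0 < ε → ∀ l ∈ Unb, c ε l ≠ 0)
    (Eps : ℝ → ℂ)
    (hEps : ∀ ε : ℝ, 0 < ε →
      Eps ε = ⟪Φfr, (Hfr + (lam : ℂ) • V) (S ε lam Φfr)⟫ / c ε lam)
    (T : ℝ → ℝ → ℋ →L[ℂ] ℋ)
    (hT : ∀ ε l : ℝ, T ε l = (((‖c ε l‖ : ℝ) : ℂ) / c ε l) • S ε l)
    (SGL : ℋ →L[ℂ] ℋ)
    (hweak : ∀ φ ψ : ℋ,
      Tendsto (fun ε => ⟪φ, (T ε lam) ψ⟫) (𝓝[>] (0 : ℝ)) (𝓝 ⟪φ, SGL ψ⟫))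
    (hweak' : ∀ φ ψ : ℋ,
      Tendsto (fun ε : ℝ => ⟪φ, (((ε * lam : ℝ) : ℂ) • deriv (fun l => T ε l) lam) ψ⟫)
        (𝓝[>] (0 : ℝ)) (𝓝 0))
    (E : ℂ) (hE : Tendsto Eps (𝓝[>] (0 : ℝ)) (𝓝 E)) :
    SGL ∘L (Hfr - (Efr : ℂ) • (1 : ℋ →L[ℂ] ℋ))
      = (Hfr + (lam : ℂ) • V - ((E.re : ℝ) : ℂ) • (1 : ℋ →L[ℂ] ℋ)) ∘L SGL :=
  stmt_5_general Hfr V σ lam Φfr Efr hEfr S S' Unb hUnb hS hODE c hc hc0 Eps hEps T hT SGL hweak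
    hweak' E hE
end
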